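/- arXiv:2602.08496 — 4 statements merged into one kernel-verified Lean document; each statement's English description precedes it below -/
import Mathlib

section
/- Let u₀ : ℝ → ℝ be a bounded Lebesgue-measurable function, and fix x > 0 and t > 0. Define I₁^ε(x,t) = (1/(2√(π ε t))) ∫₀^∞ exp( −(1/(2ε)) [ (x−ξ)²/(2t) + ∫₀^ξ u₀(z) dz ] ) dξ for ε > 0. Then lim_{ε → 0⁺} [ −2ε · log I₁^ε(x,t) ] = min_{ξ ≥ 0} [ (x−ξ)²/(2t) + ∫₀^ξ u₀(z) dz ], and this minimum is attained. -/
/-!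
Laplace's method. Put `F ξ = (x - ξ)² / (2t) + ∫₀^ξ u₀` and `λ = 1 / (2ε)`, so that
`-2ε log I₁^ε = -2ε log (prefactor) - λ⁻¹ log ∫_{ξ > 0} e^{-λ F}`, and the prefactor term is
`ε log (4πtε) → 0`. Since `|∫₀^ξ u₀| ≤ M |ξ|`, `F` is continuous and bounded below by a
positive multiple of `ξ²` minus a constant; hence it attains its minimum `m` on `[0, ∞)` and
`e^{-F}` is integrable. From `e^{-λF} ≤ e^{-(λ-1)m} e^{-F}` on `(0, ∞)` we get
`-λ⁻¹ log ∫ e^{-λF} ≥ m - O(1/λ)`. Conversely, by continuity `F < m + δ` on an open set of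
positive finite measure next to the minimiser, which gives `-λ⁻¹ log ∫ e^{-λF} ≤ m + δ + O(1/λ)`.
-/

open MeasureTheory Filter Topology Real Set

lemma exp_neg_mul_le_exp_mul_exp_neg_mul {m y l₀ l : ℝ} (hy : m ≤ y) (hl : l₀ ≤ l) :
    exp (-l * y) ≤ exp (-(l - l₀) * m) * exp (-l₀ * y) := by
  rw [← exp_add]
  exact exp_le_exp.2 (by nlinarith)

section Laplace

variable {X : Type*} [MeasurableSpace X] {μ : Measure X} {F : X → ℝ} {x₀ : X} {l₀ l : ℝ}

lemma integrable_exp_neg_mul_of_le (hF : AEMeasurable F μ) (hmin : ∀ᵐ x ∂μ, F x₀ ≤ F x)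
    (hint : Integrable (fun x ↦ exp (-l₀ * F x)) μ) (hl : l₀ ≤ l) :
    Integrable (fun x ↦ exp (-l * F x)) μ :=
  (hint.const_mul (exp (-(l - l₀) * F x₀))).mono' (hF.const_mul _).exp.aestronglyMeasurable
    (hmin.mono fun x hx ↦ by
      rw [norm_of_nonneg (exp_pos _).le]
      exact exp_neg_mul_le_exp_mul_exp_neg_mul hx hl)

lemma integral_exp_neg_mul_le (hF : AEMeasurable F μ) (hmin : ∀ᵐ x ∂μ, F x₀ ≤ F x)
    (hint : Integrable (fun x ↦ exp (-l₀ * F x)) μ) (hl : l₀ ≤ l) :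
    ∫ x, exp (-l * F x) ∂μ ≤ exp (-(l - l₀) * F x₀) * ∫ x, exp (-l₀ * F x) ∂μ := by
  rw [← integral_const_mul]
  exact integral_mono_ae (integrable_exp_neg_mul_of_le hF hmin hint hl)
    (hint.const_mul _) (hmin.mono fun x hx ↦ exp_neg_mul_le_exp_mul_exp_neg_mul hx hl)

variable [TopologicalSpace X]

lemma eventually_lt_neg_inv_mul_log_integral_exp_neg_mul (hF : AEMeasurable F μ)
    (hmin : ∀ᵐ x ∂μ, F x₀ ≤ F x) (hx₀ : x₀ ∈ μ.support)
    (hint : Integrable (fun x ↦ exp (-l₀ * F x)) μ) {b : ℝ} (hb : b < F x₀) :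
    ∀ᶠ l in atTop, b < -l⁻¹ * log (∫ x, exp (-l * F x) ∂μ) := by
  have : NeZero μ := ⟨fun h ↦ by simp [h] at hx₀⟩
  set K := ∫ x, exp (-l₀ * F x) ∂μ
  have hK : 0 < K := integral_exp_pos hint
  have hlim : Tendsto (fun l : ℝ ↦ F x₀ - l⁻¹ * (l₀ * F x₀ + log K)) atTop (𝓝 (F x₀)) := by
    simpa using (tendsto_inv_atTop_zero.mul_const (l₀ * F x₀ + log K)).const_sub (F x₀)
  filter_upwards [hlim.eventually (lt_mem_nhds hb), eventually_ge_atTop l₀,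
    eventually_gt_atTop 0] with l hbl hl hl0
  have hI := integral_exp_pos (integrable_exp_neg_mul_of_le hF hmin hint hl)
  have hlog : log (∫ x, exp (-l * F x) ∂μ) ≤ -(l - l₀) * F x₀ + log K := by
    rw [← log_exp (-(l - l₀) * F x₀), ← log_mul (exp_pos _).ne' hK.ne']
    exact log_le_log hI (integral_exp_neg_mul_le hF hmin hint hl)
  calc b < F x₀ - l⁻¹ * (l₀ * F x₀ + log K) := hbl
    _ = -l⁻¹ * (-(l - l₀) * F x₀ + log K) := by field_simp; ring
    _ ≤ -l⁻¹ * log (∫ x, exp (-l * F x) ∂μ) :=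
        mul_le_mul_of_nonpos_left hlog (neg_nonpos.2 (inv_pos.2 hl0).le)

variable [OpensMeasurableSpace X] [IsLocallyFiniteMeasure μ]

lemma exists_pos_mul_exp_le_integral_exp_neg_mul (hcont : ContinuousAt F x₀)
    (hx₀ : x₀ ∈ μ.support) {δ : ℝ} (hδ : 0 < δ) :
    ∃ c > 0, ∀ l, 0 ≤ l → Integrable (fun x ↦ exp (-l * F x)) μ →
      c * exp (-l * (F x₀ + δ)) ≤ ∫ x, exp (-l * F x) ∂μ := by
  obtain ⟨W, hx₀W, hWopen, hWfin⟩ := μ.exists_isOpen_measure_lt_top x₀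
  obtain ⟨V, hVsub, hVopen, hx₀V⟩ := mem_nhds_iff.1 <|
    inter_mem (hcont.eventually (gt_mem_nhds (lt_add_of_pos_right (F x₀) hδ)))
      (hWopen.mem_nhds hx₀W)
  have hVfin : μ V ≠ ⊤ := ((measure_mono fun x hx ↦ (hVsub hx).2).trans_lt hWfin).ne
  refine ⟨μ.real V, ENNReal.toReal_pos ((μ.mem_support_iff_forall x₀).1 hx₀ V
    (hVopen.mem_nhds hx₀V)).ne' hVfin, fun l hl hint ↦ ?_⟩
  calc μ.real V * exp (-l * (F x₀ + δ)) ≤ ∫ x in V, exp (-l * F x) ∂μ := by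
        rw [mul_comm]
        refine setIntegral_ge_of_const_le_real hVopen.measurableSet hVfin (fun x hx ↦ ?_)
          hint.integrableOn
        have : F x < F x₀ + δ := (hVsub hx).1
        exact exp_le_exp.2 (by nlinarith)
    _ ≤ ∫ x, exp (-l * F x) ∂μ :=
        setIntegral_le_integral hint (Eventually.of_forall fun _ ↦ (exp_pos _).le)

lemma eventually_neg_inv_mul_log_integral_exp_neg_mul_lt (hF : AEMeasurable F μ)
    (hcont : ContinuousAt F x₀) (hmin : ∀ᵐ x ∂μ, F x₀ ≤ F x) (hx₀ : x₀ ∈ μ.support)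
    (hint : Integrable (fun x ↦ exp (-l₀ * F x)) μ) {b : ℝ} (hb : F x₀ < b) :
    ∀ᶠ l in atTop, -l⁻¹ * log (∫ x, exp (-l * F x) ∂μ) < b := by
  set δ := (b - F x₀) / 2
  obtain ⟨c, hc, hlower⟩ :=
    exists_pos_mul_exp_le_integral_exp_neg_mul hcont hx₀ (show 0 < δ by simp [δ, hb])
  have hlim : Tendsto (fun l : ℝ ↦ F x₀ + δ - l⁻¹ * log c) atTop (𝓝 (F x₀ + δ)) := by
    simpa using (tendsto_inv_atTop_zero.mul_const (log c)).const_sub (F x₀ + δ)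
  filter_upwards [hlim.eventually (gt_mem_nhds (show F x₀ + δ < b by simp [δ]; linarith)),
    eventually_ge_atTop l₀, eventually_gt_atTop 0] with l hbl hl hl0
  have hlog : log c + -l * (F x₀ + δ) ≤ log (∫ x, exp (-l * F x) ∂μ) := by
    rw [← log_exp (-l * (F x₀ + δ)), ← log_mul hc.ne' (exp_pos _).ne']
    exact log_le_log (by positivity)
      (hlower l hl0.le (integrable_exp_neg_mul_of_le hF hmin hint hl))
  calc -l⁻¹ * log (∫ x, exp (-l * F x) ∂μ) ≤ -l⁻¹ * (log c + -l * (F x₀ + δ)) :=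
        mul_le_mul_of_nonpos_left hlog (neg_nonpos.2 (inv_pos.2 hl0).le)
    _ = F x₀ + δ - l⁻¹ * log c := by field_simp; ring
    _ < b := hbl

theorem tendsto_neg_inv_mul_log_integral_exp_neg_mul (hF : AEMeasurable F μ)
    (hcont : ContinuousAt F x₀) (hmin : ∀ᵐ x ∂μ, F x₀ ≤ F x) (hx₀ : x₀ ∈ μ.support)
    (hint : Integrable (fun x ↦ exp (-l₀ * F x)) μ) :
    Tendsto (fun l ↦ -l⁻¹ * log (∫ x, exp (-l * F x) ∂μ)) atTop (𝓝 (F x₀)) :=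
  tendsto_order.2
    ⟨fun _ hb ↦ eventually_lt_neg_inv_mul_log_integral_exp_neg_mul hF hmin hx₀ hint hb,
      fun _ hb ↦ eventually_neg_inv_mul_log_integral_exp_neg_mul_lt hF hcont hmin hx₀ hint hb⟩

end Laplace

lemma tendsto_neg_two_mul_mul_log_one_div_two_mul_sqrt {t : ℝ} (ht : 0 < t) :
    Tendsto (fun ε ↦ -2 * ε * log (1 / (2 * √(π * ε * t)))) (𝓝[>] 0) (𝓝 0) := by
  have h := ((continuous_mul_log.comp (continuous_const_mul (4 * π * t))).div_const
    (4 * π * t)).tendsto 0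
  simp only [Function.comp_apply, mul_zero, zero_mul, zero_div] at h
  refine (h.mono_left nhdsWithin_le_nhds).congr' ?_
  filter_upwards [self_mem_nhdsWithin] with ε (hε : 0 < ε)
  rw [one_div, log_inv, log_mul two_ne_zero (by positivity), log_sqrt (by positivity),
    show 4 * π * t * ε = 2 ^ 2 * (π * ε * t) by ring,
    log_mul (pow_ne_zero 2 two_ne_zero) (by positivity : π * ε * t ≠ 0), log_pow]
  field_simp
  push_cast
  ring

lemma mem_support_volume_restrict_Ioi {a ξ : ℝ} (h : a ≤ ξ) :
    ξ ∈ (volume.restrict (Ioi a)).support := by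
  have hsub : Ioi a ⊆ (volume.restrict (Ioi a)).support := by
    simpa [Measure.support_eq_univ] using
      Measure.interior_inter_support (μ := volume) (s := Ioi a)
  exact Measure.isClosed_support.closure_subset_iff.2 hsub (closure_Ioi a ▸ h)

section QuadraticGrowth

variable {G : ℝ → ℝ} {a C : ℝ}

lemma tendsto_cocompact_atTop_of_quadratic_le (ha : 0 < a) (h : ∀ ξ, a * ξ ^ 2 - C ≤ G ξ) :
    Tendsto G (cocompact ℝ) atTop := by
  refine tendsto_atTop_mono h (tendsto_atTop_add_const_right _ _ ?_)
  refine Tendsto.const_mul_atTop ha ?_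
  have h := (tendsto_pow_atTop two_ne_zero).comp (tendsto_norm_cocompact_atTop (E := ℝ))
  simpa only [Function.comp_def, norm_eq_abs, sq_abs] using h

lemma integrable_exp_neg_mul_of_quadratic_le (hG : AEMeasurable G) (ha : 0 < a)
    (h : ∀ ξ, a * ξ ^ 2 - C ≤ G ξ) {l : ℝ} (hl : 0 < l) :
    Integrable (fun ξ ↦ exp (-l * G ξ)) := by
  refine ((integrable_exp_neg_mul_sq (mul_pos hl ha)).const_mul (exp (l * C))).mono'
    (hG.const_mul _).exp.aestronglyMeasurable (Eventually.of_forall fun ξ ↦ ?_)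
  rw [norm_of_nonneg (exp_pos _).le, ← exp_add]
  exact exp_le_exp.2 (by nlinarith [h ξ])

lemma Continuous.exists_isMinOn_of_quadratic_le (hG : Continuous G) (ha : 0 < a)
    (h : ∀ ξ, a * ξ ^ 2 - C ≤ G ξ) {s : Set ℝ} (hs : IsClosed s) (hne : s.Nonempty) :
    ∃ ξ₀ ∈ s, IsMinOn G s ξ₀ :=
  hG.continuousOn.exists_isMinOn' hs hne.some_mem
    (((tendsto_cocompact_atTop_of_quadratic_le ha h).eventually
      (eventually_ge_atTop (G hne.some))).filter_mono inf_le_left)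

end QuadraticGrowth

lemma continuous_primitive_of_abs_le {u₀ : ℝ → ℝ} {M : ℝ} (hmeas : Measurable u₀)
    (hbdd : ∀ y, |u₀ y| ≤ M) (a : ℝ) : Continuous fun ξ ↦ ∫ z in a..ξ, u₀ z :=
  intervalIntegral.continuous_primitive (fun _ _ ↦
    (Measure.integrableOn_of_bounded isCompact_uIcc.measure_lt_top.ne
      hmeas.aestronglyMeasurable (Eventually.of_forall hbdd)).intervalIntegrable) a

lemma quadratic_le_sq_div_add_integral {u₀ : ℝ → ℝ} {M : ℝ} (hbdd : ∀ y, |u₀ y| ≤ M)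
    {x t : ℝ} (ht : 0 < t) (ξ : ℝ) :
    (8 * t)⁻¹ * ξ ^ 2 - (x ^ 2 / (2 * t) + 2 * t * M ^ 2)
      ≤ (x - ξ) ^ 2 / (2 * t) + ∫ z in (0 : ℝ)..ξ, u₀ z := by
  have hprim : |∫ z in (0 : ℝ)..ξ, u₀ z| ≤ M * |ξ| := by
    simpa using intervalIntegral.norm_integral_le_of_norm_le_const (a := 0) (b := ξ)
      fun z _ ↦ (norm_eq_abs _).trans_le (hbdd z)
  have hsq : 0 ≤ ((|ξ| - 4 * t * M) ^ 2 + 2 * (ξ - 2 * x) ^ 2) / (8 * t) := by positivity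
  have key : (x - ξ) ^ 2 / (2 * t) - M * |ξ|
        - ((8 * t)⁻¹ * ξ ^ 2 - (x ^ 2 / (2 * t) + 2 * t * M ^ 2))
      = ((|ξ| - 4 * t * M) ^ 2 + 2 * (ξ - 2 * x) ^ 2) / (8 * t) := by
    field_simp
    linear_combination -2 * sq_abs ξ
  linarith [neg_abs_le (∫ z in (0 : ℝ)..ξ, u₀ z)]

theorem limit_I1_general (u₀ : ℝ → ℝ) (hmeas : Measurable u₀) (M : ℝ) (hbdd : ∀ y : ℝ, |u₀ y| ≤ M)
    (x t : ℝ) (ht : 0 < t) :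
    ∃ ξ₀ ∈ Set.Ici (0 : ℝ),
      (∀ ξ ∈ Set.Ici (0 : ℝ),
        (x - ξ₀) ^ 2 / (2 * t) + (∫ z in (0 : ℝ)..ξ₀, u₀ z)
          ≤ (x - ξ) ^ 2 / (2 * t) + ∫ z in (0 : ℝ)..ξ, u₀ z) ∧
      Tendsto (fun ε : ℝ =>
          -2 * ε * Real.log ((1 / (2 * Real.sqrt (Real.pi * ε * t))) *
            ∫ ξ in Set.Ioi (0 : ℝ),
              Real.exp (-(1 / (2 * ε)) * ((x - ξ) ^ 2 / (2 * t) + ∫ z in (0 : ℝ)..ξ, u₀ z))))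
        (nhdsWithin 0 (Set.Ioi 0))
        (nhds ((x - ξ₀) ^ 2 / (2 * t) + ∫ z in (0 : ℝ)..ξ₀, u₀ z)) := by
  set F : ℝ → ℝ := fun ξ ↦ (x - ξ) ^ 2 / (2 * t) + ∫ z in (0 : ℝ)..ξ, u₀ z
  have hF : Continuous F :=
    (by fun_prop : Continuous fun ξ : ℝ ↦ (x - ξ) ^ 2 / (2 * t)).add
      (continuous_primitive_of_abs_le hmeas hbdd 0)
  have hquad := quadratic_le_sq_div_add_integral hbdd (x := x) ht
  obtain ⟨ξ₀, hξ₀, hmin⟩ :=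
    hF.exists_isMinOn_of_quadratic_le (by positivity) hquad isClosed_Ici nonempty_Ici
  refine ⟨ξ₀, hξ₀, fun ξ hξ ↦ hmin hξ, ?_⟩
  have hI (l : ℝ) (hl : 0 < l) :
      Integrable (fun ξ ↦ exp (-l * F ξ)) (volume.restrict (Ioi 0)) :=
    (integrable_exp_neg_mul_of_quadratic_le hF.aemeasurable (by positivity) hquad hl).restrict
  have hlap := tendsto_neg_inv_mul_log_integral_exp_neg_mul hF.aemeasurable hF.continuousAt
    (ae_restrict_of_forall_mem measurableSet_Ioi fun ξ hξ ↦ hmin (le_of_lt hξ))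
    (mem_support_volume_restrict_Ioi hξ₀) (hI 1 one_pos)
  have hscale : Tendsto (fun ε : ℝ ↦ 1 / (2 * ε)) (𝓝[>] 0) atTop :=
    (tendsto_inv_nhdsGT_zero.const_mul_atTop (by norm_num : (0 : ℝ) < 1 / 2)).congr
      fun ε ↦ by ring
  have hsum := (tendsto_neg_two_mul_mul_log_one_div_two_mul_sqrt ht).add (hlap.comp hscale)
  rw [zero_add] at hsum
  refine hsum.congr' ?_
  filter_upwards [self_mem_nhdsWithin] with ε (hε : 0 < ε)
  have : NeZero (volume.restrict (Ioi (0 : ℝ))) := ⟨by simp⟩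
  have hIpos := integral_exp_pos (hI (1 / (2 * ε)) (by positivity))
  rw [Function.comp_apply, log_mul (by positivity) hIpos.ne', mul_add, one_div (2 * ε), inv_inv]
  ring

/-- **Vanishing-viscosity limit of `I₁^ε` (the `U_R³` component of Theorem 3.1).**
For bounded measurable `u₀`, `x > 0`, `t > 0`, the function
`ξ ↦ (x-ξ)²/(2t) + ∫₀^ξ u₀` attains its minimum over `[0,∞)` at some `ξ₀`, and
`-2ε log I₁^ε(x,t) → (x-ξ₀)²/(2t) + ∫₀^{ξ₀} u₀` as `ε → 0⁺`, where
`I₁^ε(x,t) = (1/(2√(πεt))) ∫₀^∞ exp(-(1/2ε)[(x-ξ)²/(2t) + ∫₀^ξ u₀]) dξ`. -/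
theorem limit_I1 (u₀ : ℝ → ℝ) (hmeas : Measurable u₀) (M : ℝ) (hbdd : ∀ y : ℝ, |u₀ y| ≤ M)
    (x t : ℝ) (hx : 0 < x) (ht : 0 < t) :
    ∃ ξ₀ ∈ Set.Ici (0 : ℝ),
      (∀ ξ ∈ Set.Ici (0 : ℝ),
        (x - ξ₀) ^ 2 / (2 * t) + (∫ z in (0 : ℝ)..ξ₀, u₀ z)
          ≤ (x - ξ) ^ 2 / (2 * t) + ∫ z in (0 : ℝ)..ξ, u₀ z) ∧
      Tendsto (fun ε : ℝ =>
          -2 * ε * Real.log ((1 / (2 * Real.sqrt (Real.pi * ε * t))) *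
            ∫ ξ in Set.Ioi (0 : ℝ),
              Real.exp (-(1 / (2 * ε)) * ((x - ξ) ^ 2 / (2 * t) + ∫ z in (0 : ℝ)..ξ, u₀ z))))
        (nhdsWithin 0 (Set.Ioi 0))
        (nhds ((x - ξ₀) ^ 2 / (2 * t) + ∫ z in (0 : ℝ)..ξ₀, u₀ z)) :=
  limit_I1_general u₀ hmeas M hbdd x t ht
end

section
/- Let t > 0, let g : ℝ → ℝ be any function, let S ⊆ ℝ, and let x₁ < x be real numbers. Suppose ξ₁ ∈ S is a minimizer of ξ ↦ (x−ξ)²/(2t) + g(ξ) over S, and ξ₂ ∈ S is a minimizer of ξ ↦ (x₁−ξ)²/(2t) + g(ξ) over S. Then ξ₂ ≤ ξ₁. -/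
/-! Adding the two minimality inequalities cancels the `g`-terms, and the quadratic cost
satisfies `(x - ξ₁)² + (x₁ - ξ₂)² - (x - ξ₂)² - (x₁ - ξ₁)² = -2 (x - x₁)(ξ₁ - ξ₂)`,
so `(x - x₁)(ξ₁ - ξ₂) ≥ 0`. -/

theorem sub_mul_sub_nonneg_of_quadratic_cost_le {c : ℝ} (hc : 0 < c)
    {x₁ x ξ₁ ξ₂ a₁ a₂ : ℝ}
    (h₁ : (x - ξ₁) ^ 2 / c + a₁ ≤ (x - ξ₂) ^ 2 / c + a₂)
    (h₂ : (x₁ - ξ₂) ^ 2 / c + a₂ ≤ (x₁ - ξ₁) ^ 2 / c + a₁) :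
    0 ≤ (x - x₁) * (ξ₁ - ξ₂) := by
  have hsum : ((x - ξ₁) ^ 2 + (x₁ - ξ₂) ^ 2 - (x - ξ₂) ^ 2 - (x₁ - ξ₁) ^ 2) / c ≤ 0 := by
    simp only [add_div, sub_div]
    linarith
  have hcost : (x - ξ₁) ^ 2 + (x₁ - ξ₂) ^ 2 - (x - ξ₂) ^ 2 - (x₁ - ξ₁) ^ 2
      = -(2 * ((x - x₁) * (ξ₁ - ξ₂))) := by ring
  rw [hcost, div_le_iff₀ hc, zero_mul] at hsum
  linarith

/-- **Non-intersecting property, ξ-component (Lemma 4.1).** If `ξ₁` minimizes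
`ξ ↦ (x-ξ)²/(2t) + g(ξ)` over `S` and `ξ₂` minimizes `ξ ↦ (x₁-ξ)²/(2t) + g(ξ)` over `S`
with `x₁ < x`, then `ξ₂ ≤ ξ₁`. -/
theorem xi_nonintersecting (t : ℝ) (ht : 0 < t) (g : ℝ → ℝ) (S : Set ℝ)
    (x₁ x : ℝ) (hx : x₁ < x) (ξ₁ ξ₂ : ℝ) (hξ₁ : ξ₁ ∈ S) (hξ₂ : ξ₂ ∈ S)
    (hmin₁ : ∀ ξ ∈ S, (x - ξ₁) ^ 2 / (2 * t) + g ξ₁ ≤ (x - ξ) ^ 2 / (2 * t) + g ξ)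
    (hmin₂ : ∀ ξ ∈ S, (x₁ - ξ₂) ^ 2 / (2 * t) + g ξ₂ ≤ (x₁ - ξ) ^ 2 / (2 * t) + g ξ) :
    ξ₂ ≤ ξ₁ := by
  have hmono : 0 ≤ (x - x₁) * (ξ₁ - ξ₂) :=
    sub_mul_sub_nonneg_of_quadratic_cost_le (by positivity) (hmin₁ ξ₂ hξ₂) (hmin₂ ξ₁ hξ₁)
  exact sub_nonneg.mp (nonneg_of_mul_nonneg_right hmono (sub_pos.mpr hx))
end

section
/- Let t > 0, let g : ℝ → ℝ be any function, and let S ⊆ ℝ be nonempty. Suppose that for every x ∈ ℝ the function ξ ↦ (x−ξ)²/(2t) + g(ξ) attains its minimum over S. Then the set of points x ∈ ℝ at which this minimum is attained at two distinct elements of S is countable. -/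
/-!
Minimizers are monotone in `x`: adding the minimality inequalities of `ξ` at `x` and of `η` at
`y` cancels `g` and leaves `(y - x) (ξ - η) ≤ 0`. Hence at two points of non-uniqueness the open
intervals between two distinct minimizers are disjoint, and disjoint nonempty open intervals of
`ℝ` are countably many.
-/

open Set TopologicalSpace

theorem countable_setOf_nontrivial_of_forall_le {α β : Type*} [LinearOrder α] [LinearOrder β]
    [TopologicalSpace β] [OrderClosedTopology β] [DenselyOrdered β] [SeparableSpace β]
    (m : α → Set β) (hm : ∀ ⦃x y⦄, x < y → ∀ a ∈ m x, ∀ b ∈ m y, a ≤ b) :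
    {x | (m x).Nontrivial}.Countable := by
  choose lo hlo hi hhi hlt using fun x : {x | (m x).Nontrivial} ↦ x.2.exists_lt
  rw [← countable_coe_iff]
  refine Pairwise.countable_of_isOpen_disjoint (s := fun x ↦ Ioo (lo x) (hi x))
    (Pairwise.of_lt fun x y hxy ↦ ?_) (fun _ ↦ isOpen_Ioo) (fun x ↦ nonempty_Ioo.2 (hlt x))
  exact disjoint_left.2 fun z hzx hzy ↦
    ((hzx.2.trans_le (hm hxy _ (hhi x) _ (hlo y))).trans hzy.1).false

theorem le_of_isMinOn_sq_div_add {t : ℝ} (ht : 0 < t) {g : ℝ → ℝ} {S : Set ℝ} {x y ξ η : ℝ}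
    (hξS : ξ ∈ S) (hηS : η ∈ S) (hξ : IsMinOn (fun ζ ↦ (x - ζ) ^ 2 / (2 * t) + g ζ) S ξ)
    (hη : IsMinOn (fun ζ ↦ (y - ζ) ^ 2 / (2 * t) + g ζ) S η) (hxy : x < y) : ξ ≤ η := by
  have cross : (x - ξ) ^ 2 / (2 * t) + g ξ + ((y - η) ^ 2 / (2 * t) + g η) -
      ((x - η) ^ 2 / (2 * t) + g η + ((y - ξ) ^ 2 / (2 * t) + g ξ)) = (y - x) / t * (ξ - η) := by
    field_simp
    ring
  have key : (y - x) / t * (ξ - η) ≤ 0 := cross ▸ sub_nonpos.2 (add_le_add (hξ hηS) (hη hξS))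
  exact sub_nonpos.1 (nonpos_of_mul_nonpos_right key (div_pos (sub_pos.2 hxy) ht))

theorem nonuniqueness_countable_general (t : ℝ) (ht : 0 < t) (g : ℝ → ℝ) (S : Set ℝ) :
    Set.Countable {x : ℝ | ∃ ξ₁ ∈ S, ∃ ξ₂ ∈ S, ξ₁ ≠ ξ₂ ∧
      (∀ ξ' ∈ S, (x - ξ₁) ^ 2 / (2 * t) + g ξ₁ ≤ (x - ξ') ^ 2 / (2 * t) + g ξ') ∧
      (∀ ξ' ∈ S, (x - ξ₂) ^ 2 / (2 * t) + g ξ₂ ≤ (x - ξ') ^ 2 / (2 * t) + g ξ')} := by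
  let minimizers (x : ℝ) : Set ℝ := {ξ ∈ S | IsMinOn (fun ζ ↦ (x - ζ) ^ 2 / (2 * t) + g ζ) S ξ}
  refine (countable_setOf_nontrivial_of_forall_le minimizers fun x y hxy ξ hξ η hη ↦
    le_of_isMinOn_sq_div_add ht hξ.1 hη.1 hξ.2 hη.2 hxy).mono ?_
  rintro x ⟨ξ₁, h₁S, ξ₂, h₂S, hne, h₁, h₂⟩
  exact ⟨ξ₁, ⟨h₁S, isMinOn_iff.2 h₁⟩, ξ₂, ⟨h₂S, isMinOn_iff.2 h₂⟩, hne⟩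

/-- **Theorem 4.2 (uniqueness of minimizers a.e.).** If for every `x` the function
`ξ ↦ (x-ξ)²/(2t) + g(ξ)` attains its minimum over a nonempty `S ⊆ ℝ`, then the set of
points `x` at which the minimum is attained at two distinct elements of `S` is countable. -/
theorem nonuniqueness_countable (t : ℝ) (ht : 0 < t) (g : ℝ → ℝ) (S : Set ℝ)
    (hS : S.Nonempty)
    (hattain : ∀ x : ℝ, ∃ ξ ∈ S, ∀ ξ' ∈ S,
      (x - ξ) ^ 2 / (2 * t) + g ξ ≤ (x - ξ') ^ 2 / (2 * t) + g ξ') :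
    Set.Countable {x : ℝ | ∃ ξ₁ ∈ S, ∃ ξ₂ ∈ S, ξ₁ ≠ ξ₂ ∧
      (∀ ξ' ∈ S, (x - ξ₁) ^ 2 / (2 * t) + g ξ₁ ≤ (x - ξ') ^ 2 / (2 * t) + g ξ') ∧
      (∀ ξ' ∈ S, (x - ξ₂) ^ 2 / (2 * t) + g ξ₂ ≤ (x - ξ') ^ 2 / (2 * t) + g ξ')} :=
  nonuniqueness_countable_general t ht g S
end

section
/- Let τ₁, t̄, t, x, x̄, y₁ be real numbers with 0 ≤ τ₁ < t̄ < t, and suppose (x̄ − y₁)·t = (x − y₁)·t̄ (i.e. the point (x̄, t̄) lies on the line through (y₁, 0) and (x, t)). Then x²/(t − τ₁) ≤ ((x − y₁)/t)² · (t − t̄) + x̄²/(t̄ − τ₁). -/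
theorem add_sq_div_add_le {R : Type*} [Field R] [LinearOrder R] [IsStrictOrderedRing R]
    (a₁ a₂ : R) {w₁ w₂ : R} (hw₁ : 0 < w₁) (hw₂ : 0 < w₂) :
    (a₁ + a₂) ^ 2 / (w₁ + w₂) ≤ a₁ ^ 2 / w₁ + a₂ ^ 2 / w₂ := by
  simpa [Fin.sum_univ_two] using
    Finset.sq_sum_div_le_sum_sq_div Finset.univ ![a₁, a₂] (g := ![w₁, w₂])
      (by simp [Fin.forall_fin_two, hw₁, hw₂])

theorem sq_div_eq_div_sq_mul {K : Type*} [Field K] (a : K) {w : K} (hw : w ≠ 0) :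
    a ^ 2 / w = (a / w) ^ 2 * w := by
  field_simp

/-- **Key estimate in Step 2 of Lemma 4.3 (inequalities (c1)–(c2)).** If
`0 ≤ τ₁ < t̄ < t` and `(x̄, t̄)` lies on the line through `(y₁, 0)` and `(x, t)`
(i.e. `(x̄ - y₁) t = (x - y₁) t̄`), then
`x²/(t - τ₁) ≤ ((x - y₁)/t)² (t - t̄) + x̄²/(t̄ - τ₁)`. -/
theorem convexity_line_estimate (τ₁ tb t x xb y₁ : ℝ)
    (h0 : 0 ≤ τ₁) (h1 : τ₁ < tb) (h2 : tb < t)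
    (hline : (xb - y₁) * t = (x - y₁) * tb) :
    x ^ 2 / (t - τ₁) ≤ ((x - y₁) / t) ^ 2 * (t - tb) + xb ^ 2 / (tb - τ₁) := by
  have ht : 0 < t := by linarith
  have hslope : (x - xb) / (t - tb) = (x - y₁) / t := by
    rw [div_eq_div_iff (by linarith) ht.ne']
    linear_combination -hline
  calc x ^ 2 / (t - τ₁) = (x - xb + xb) ^ 2 / ((t - tb) + (tb - τ₁)) := by ring_nf
    _ ≤ (x - xb) ^ 2 / (t - tb) + xb ^ 2 / (tb - τ₁) :=
      add_sq_div_add_le _ _ (by linarith) (by linarith)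
    _ = ((x - y₁) / t) ^ 2 * (t - tb) + xb ^ 2 / (tb - τ₁) := by
      rw [sq_div_eq_div_sq_mul _ (by linarith : t - tb ≠ 0), hslope]
end
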